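/- arXiv:1905.10579 — 8 statements merged into one kernel-verified Lean document; each statement's English description precedes it below -/
import Mathlib

section
/- For any positive integers n and k and any x in the algebraic closure of GF(2), T_k(x) + T_k(x)^{2^n} = T_n(x) + T_n(x)^{2^k}. Consequently T_k(x) lies in GF(2^n) if and only if T_n(x) lies in GF(2^k). -/
/-- `T l k x = ∑_{i=0}^{k/l - 1} x^(2^(l*i))`, the linearized trace-like polynomial. -/
noncomputable def T {F : Type*} [Field F] (l k : ℕ) (x : F) : F :=
  ∑ i ∈ Finset.range (k / l), x ^ (2 ^ (l * i))

lemma T_key {F : Type*} [Field F] [CharP F 2] (n k : ℕ) (x : F) :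
    T 1 (n + k) x = T 1 n x + (T 1 k x) ^ (2 ^ n) := by
  simp only [T, Nat.div_one, one_mul]
  rw [← iterateFrobenius_def (p := 2), map_sum, Finset.sum_range_add]
  congr 1
  refine Finset.sum_congr rfl fun i _ => ?_
  rw [iterateFrobenius_def, ← pow_mul, ← pow_add, Nat.add_comm]

theorem stmt_4 (n k : ℕ) (hn : 0 < n) (hk : 0 < k) (x : AlgebraicClosure (ZMod 2)) :
    T 1 k x + (T 1 k x) ^ (2 ^ n) = T 1 n x + (T 1 n x) ^ (2 ^ k) ∧
    ((T 1 k x) ^ (2 ^ n) = T 1 k x ↔ (T 1 n x) ^ (2 ^ k) = T 1 n x) := by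
  have h2 : CharP (AlgebraicClosure (ZMod 2)) 2 := inferInstance
  have hk' := T_key (F := AlgebraicClosure (ZMod 2)) n k x
  have hn' := T_key (F := AlgebraicClosure (ZMod 2)) k n x
  rw [Nat.add_comm k n] at hn'
  have main : T 1 k x + (T 1 k x) ^ (2 ^ n) = T 1 n x + (T 1 n x) ^ (2 ^ k) := by
    have := hk'.symm.trans hn'
    -- T n + T k ^ 2^n = T k + T n ^ 2^k
    have two : (2 : AlgebraicClosure (ZMod 2)) = 0 := CharTwo.two_eq_zero
    linear_combination this + (T 1 k x - T 1 n x) * two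
  refine ⟨main, ?_⟩
  constructor <;> intro h
  · have : T 1 n x + (T 1 n x) ^ (2 ^ k) = T 1 k x + T 1 k x := by rw [← main, h]
    have h0 : T 1 n x + (T 1 n x) ^ (2 ^ k) = 0 := by
      rw [this, CharTwo.add_self_eq_zero]
    have two : (2 : AlgebraicClosure (ZMod 2)) = 0 := CharTwo.two_eq_zero
    linear_combination -h0 + (T 1 n x) ^ (2 ^ k) * two
  · have : T 1 k x + (T 1 k x) ^ (2 ^ n) = T 1 n x + T 1 n x := by rw [main, h]
    have h0 : T 1 k x + (T 1 k x) ^ (2 ^ n) = 0 := by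
      rw [this, CharTwo.add_self_eq_zero]
    have two : (2 : AlgebraicClosure (ZMod 2)) = 0 := CharTwo.two_eq_zero
    linear_combination -h0 + (T 1 k x) ^ (2 ^ n) * two
end

section
/- Let n, k be positive integers with gcd(n, k) = 1. Then for x in the algebraic closure of GF(2), T_k(x) lies in GF(2^n) if and only if x = a + b for some a in GF(2^n) and b in GF(2^k). -/
set_option maxHeartbeats 1000000

section aux

variable {F : Type*} [Field F] [CharP F 2]

private lemma pow_pow_comm' (y : F) (m n : ℕ) : (y ^ 2 ^ m) ^ 2 ^ n = (y ^ 2 ^ n) ^ 2 ^ m := by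
  rw [← pow_mul, ← pow_mul, mul_comm]

private lemma sq_fix_pow {t : F} (ht : t ^ 2 = t) (m : ℕ) : t ^ 2 ^ m = t := by
  induction m with
  | zero => simp
  | succ m ih => rw [pow_succ, pow_mul, ih, ht]

private lemma fix_pow_mul {y : F} {n : ℕ} (hy : y ^ 2 ^ n = y) (v : ℕ) : y ^ 2 ^ (v * n) = y := by
  induction v with
  | zero => simp
  | succ v ih => rw [add_mul, one_mul, pow_add, pow_mul, ih, hy]

private lemma T_one (k : ℕ) (x : F) : T 1 k x = ∑ i ∈ Finset.range k, x ^ 2 ^ i := by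
  simp [T]

private lemma key (k : ℕ) (x : F) : (T 1 k x) ^ 2 + x = T 1 k x + x ^ 2 ^ k := by
  have h2 : Fact (Nat.Prime 2) := ⟨Nat.prime_two⟩
  rw [T_one, sum_pow_char]
  have h1 : (∑ i ∈ Finset.range k, (x ^ 2 ^ i) ^ 2) = ∑ i ∈ Finset.range k, x ^ 2 ^ (i + 1) := by
    refine Finset.sum_congr rfl fun i _ => ?_
    rw [← pow_mul, ← pow_succ]
  rw [h1]
  have h3 := Finset.sum_range_succ' (fun i => x ^ 2 ^ i) k
  have h4 := Finset.sum_range_succ (fun i => x ^ 2 ^ i) k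
  simp only [pow_zero, pow_one] at h3 h4
  rw [← h3, h4]

private lemma exists_uv (n k : ℕ) (hn : 0 < n) (hk : 0 < k) (h : Nat.gcd n k = 1) :
    ∃ u v : ℕ, u * k = 1 + v * n := by
  have hc : Nat.Coprime k n := Nat.coprime_comm.mpr h
  have ht := Nat.ModEq.pow_totient hc
  have htp : 0 < Nat.totient n := Nat.totient_pos.mpr hn
  refine ⟨k ^ (Nat.totient n - 1), ?_⟩
  have huk : k ^ (Nat.totient n - 1) * k = k ^ Nat.totient n := by
    rw [← pow_succ, Nat.sub_add_cancel htp]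
  have h1 : 1 ≤ k ^ Nat.totient n := Nat.one_le_pow _ _ hk
  have hd : n ∣ k ^ Nat.totient n - 1 := (Nat.modEq_iff_dvd' h1).mp ht.symm
  obtain ⟨c, hc'⟩ := hd
  exact ⟨c, by rw [huk, Nat.mul_comm c n]; omega⟩

end aux

theorem stmt_7 (n k : ℕ) (hn : 0 < n) (hk : 0 < k) (h : Nat.gcd n k = 1)
    (x : AlgebraicClosure (ZMod 2)) :
    (T 1 k x) ^ (2 ^ n) = T 1 k x ↔
      ∃ a b : AlgebraicClosure (ZMod 2),
        a ^ (2 ^ n) = a ∧ b ^ (2 ^ k) = b ∧ x = a + b := by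
  haveI : Fact (Nat.Prime 2) := ⟨Nat.prime_two⟩
  have hself : ∀ a : AlgebraicClosure (ZMod 2), a + a = 0 := CharTwo.add_self_eq_zero
  constructor
  · intro hy
    set y := T 1 k x with hyd
    obtain ⟨u, v, huv⟩ := exists_uv n k hn hk h
    set w : AlgebraicClosure (ZMod 2) := y ^ 2 + y with hwd
    -- x ^ 2^k = x + w
    have hx : x ^ 2 ^ k = x + w := by
      have hkey := key k x
      rw [← hyd] at hkey
      linear_combination -hkey - hself y
    set a : AlgebraicClosure (ZMod 2) := ∑ j ∈ Finset.range u, y ^ 2 ^ (k * j) with had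
    -- a is in GF(2^n)
    have han : a ^ 2 ^ n = a := by
      rw [had, sum_pow_char_pow]
      refine Finset.sum_congr rfl fun j _ => ?_
      rw [pow_pow_comm', hy]
    -- a ^ 2^k = a + w
    have hak : a ^ 2 ^ k = a + w := by
      have h1 : a ^ 2 ^ k = ∑ j ∈ Finset.range u, y ^ 2 ^ (k * (j + 1)) := by
        rw [had, sum_pow_char_pow]
        refine Finset.sum_congr rfl fun j _ => ?_
        rw [← pow_mul, ← pow_add, mul_add, mul_one]
      have h3 := Finset.sum_range_succ' (fun j => y ^ 2 ^ (k * j)) u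
      have h4 := Finset.sum_range_succ (fun j => y ^ 2 ^ (k * j)) u
      simp only [Nat.mul_zero, pow_zero, pow_one] at h3 h4
      -- a^2^k + y = a + y^(2^(k*u))
      have h5 : a ^ 2 ^ k + y = a + y ^ 2 ^ (k * u) := by
        rw [h1, ← h3, h4, had]
      have h6 : y ^ 2 ^ (k * u) = y ^ 2 := by
        have : k * u = v * n + 1 := by rw [Nat.mul_comm]; omega
        rw [this, pow_succ, pow_mul, fix_pow_mul hy]
      rw [h6] at h5
      linear_combination h5 - hself y
    refine ⟨a, x + a, han, ?_, ?_⟩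
    · rw [add_pow_char_pow, hx, hak]
      have : x + w + (a + w) = x + a + (w + w) := by ring
      rw [this, hself w, add_zero]
    · have : a + (x + a) = x := by
        rw [add_comm x a, ← add_assoc, hself a, zero_add]
      exact this.symm
  · rintro ⟨a, b, ha, hb, rfl⟩
    have hsplit : T 1 k (a + b) = T 1 k a + T 1 k b := by
      rw [T_one, T_one, T_one, ← Finset.sum_add_distrib]
      exact Finset.sum_congr rfl fun i _ => add_pow_char_pow ..
    have hTa : (T 1 k a) ^ 2 ^ n = T 1 k a := by
      rw [T_one, sum_pow_char_pow]
      refine Finset.sum_congr rfl fun i _ => ?_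
      rw [pow_pow_comm', ha]
    have hTb : (T 1 k b) ^ 2 = T 1 k b := by
      have := key k b
      rw [hb] at this
      exact add_right_cancel this
    rw [hsplit, add_pow_char_pow, hTa, sq_fix_pow hTb]
end

section
/- Let n, k be positive integers and d = gcd(n, k). If k/d is odd, then { x in GF(2^n) : T_k(x) = 0 } = { x in GF(2^d) : T_d(x) = 0 }. If k/d is even, then { x in GF(2^n) : T_k(x) = 0 } = GF(2^d). -/
open Polynomial Finset

noncomputable abbrev FF := AlgebraicClosure (ZMod 2)

/-- Frobenius as a `ZMod 2`-linear endomorphism of `FF`. -/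
noncomputable def frobL : Module.End (ZMod 2) FF :=
  AddMonoidHom.toZModLinearMap 2 (frobenius FF 2).toAddMonoidHom

/-- Action of a polynomial over `GF(2)` on `FF` via Frobenius. -/
noncomputable def A (p : Polynomial (ZMod 2)) (x : FF) : FF :=
  Polynomial.aeval frobL p x

lemma A_mul (p q : Polynomial (ZMod 2)) (x : FF) : A (p * q) x = A p (A q x) := by
  simp [A, map_mul, Module.End.mul_apply]

lemma A_zero (p : Polynomial (ZMod 2)) : A p 0 = 0 := by
  simp [A]

lemma A_sub (p q : Polynomial (ZMod 2)) (x : FF) : A (p - q) x = A p x - A q x := by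
  simp [A, map_sub, LinearMap.sub_apply]

lemma A_add (p q : Polynomial (ZMod 2)) (x : FF) : A (p + q) x = A p x + A q x := by
  simp [A, map_add, LinearMap.add_apply]

lemma A_X_pow (m : ℕ) (x : FF) : A (X ^ m) x = x ^ 2 ^ m := by
  simp [A, map_pow, Module.End.pow_apply]
  show (frobenius FF 2)^[m] x = _
  exact iterate_frobenius ..

lemma A_X_pow_sub_one (m : ℕ) (x : FF) : A (X ^ m - 1) x = x ^ 2 ^ m - x := by
  rw [A_sub, A_X_pow]
  simp [A]

lemma A_eq_zero_of_dvd {r p : Polynomial (ZMod 2)} (h : r ∣ p) {x : FF}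
    (hx : A r x = 0) : A p x = 0 := by
  obtain ⟨c, rfl⟩ := h
  rw [mul_comm, A_mul, hx, A_zero]

/-- geometric sum polynomial -/
noncomputable def P (k : ℕ) : Polynomial (ZMod 2) := ∑ i ∈ Finset.range k, X ^ i

lemma P_dvd (k : ℕ) : P k ∣ X ^ k - 1 := ⟨X - 1, (geom_sum_mul X k).symm⟩

lemma A_P (k : ℕ) (x : FF) : A (P k) x = ∑ i ∈ Finset.range k, x ^ 2 ^ i := by
  have : A (P k) x = ∑ i ∈ Finset.range k, A (X ^ i) x := by
    simp [A, P, map_sum, LinearMap.sum_apply]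
  rw [this]
  exact Finset.sum_congr rfl fun i _ => A_X_pow i x

lemma T_eq (k : ℕ) (x : FF) : T 1 k x = ∑ i ∈ Finset.range k, x ^ 2 ^ i := by
  simp [T]

lemma X_pow_sub_one_dvd {a b : ℕ} (h : a ∣ b) :
    (X ^ a - 1 : Polynomial (ZMod 2)) ∣ X ^ b - 1 := by
  obtain ⟨c, rfl⟩ := h
  have := sub_dvd_pow_sub_pow (X ^ a : Polynomial (ZMod 2)) 1 c
  simpa [← pow_mul] using this

/-- kernel Euclid step -/
lemma ker_mod {m n : ℕ} {x : FF} (h1 : A (X ^ m - 1) x = 0) (h2 : A (X ^ n - 1) x = 0) :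
    A (X ^ (n % m) - 1) x = 0 := by
  have hdvd : (X ^ m - 1 : Polynomial (ZMod 2)) ∣ (X ^ m) ^ (n / m) - 1 := by
    simpa using sub_dvd_pow_sub_pow (X ^ m : Polynomial (ZMod 2)) 1 (n / m)
  have hz : A (X ^ (n % m) * ((X ^ m) ^ (n / m) - 1)) x = 0 := by
    rw [A_mul, A_eq_zero_of_dvd hdvd h1, A_zero]
  have key : (X ^ (n % m) - 1 : Polynomial (ZMod 2)) =
      (X ^ n - 1) - X ^ (n % m) * ((X ^ m) ^ (n / m) - 1) := by
    have hx : (X : Polynomial (ZMod 2)) ^ (n % m) * (X ^ m) ^ (n / m) = X ^ n := by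
      rw [← pow_mul, ← pow_add, Nat.mod_add_div]
    rw [mul_sub, mul_one, hx]
    ring
  rw [key, A_sub, h2, hz, sub_zero]

lemma ker_gcd : ∀ m n : ℕ, ∀ x : FF, A (X ^ m - 1) x = 0 → A (X ^ n - 1) x = 0 →
    A (X ^ Nat.gcd m n - 1) x = 0 := by
  intro m
  induction m using Nat.strong_induction_on with
  | _ m ih =>
    intro n x h1 h2
    rcases Nat.eq_zero_or_pos m with rfl | hm
    · simpa using h2
    · rw [Nat.gcd_rec]
      exact ih (n % m) (Nat.mod_lt n hm) m x (ker_mod h1 h2) h1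

lemma P_split (a b : ℕ) : P (a + b) = P a + X ^ a * P b := by
  induction b with
  | zero => simp [P]
  | succ b ih =>
      rw [show a + (b + 1) = (a + b) + 1 from rfl]
      unfold P at *
      rw [Finset.sum_range_succ, ih, Finset.sum_range_succ]
      ring

lemma P_mod (d m : ℕ) :
    (X ^ d - 1 : Polynomial (ZMod 2)) ∣ P (d * m) - C (m : ZMod 2) * P d := by
  induction m with
  | zero => simp [P]
  | succ m ih =>
      have hsplit : P (d * (m + 1)) = P (d * m) + X ^ (d * m) * P d := by
        rw [Nat.mul_succ, P_split]
      have hdvd : (X ^ d - 1 : Polynomial (ZMod 2)) ∣ (X ^ (d * m) - 1) * P d :=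
        Dvd.dvd.mul_right (X_pow_sub_one_dvd ⟨m, rfl⟩) _
      have key : P (d * (m + 1)) - C ((m + 1 : ℕ) : ZMod 2) * P d =
          (P (d * m) - C (m : ZMod 2) * P d) + (X ^ (d * m) - 1) * P d := by
        rw [hsplit]
        push_cast
        rw [map_add, map_one]
        ring
      rw [key]
      exact dvd_add ih hdvd

/-- membership characterization -/
lemma mem_iff (n k : ℕ) (x : FF) :
    (x ^ 2 ^ n = x ∧ T 1 k x = 0) ↔ (A (X ^ n - 1) x = 0 ∧ A (P k) x = 0) := by
  rw [A_X_pow_sub_one, sub_eq_zero, A_P, T_eq]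

theorem stmt_12 (n k : ℕ) (hn : 0 < n) (hk : 0 < k) :
    (Odd (k / Nat.gcd n k) →
      {x : AlgebraicClosure (ZMod 2) | x ^ (2 ^ n) = x ∧ T 1 k x = 0} =
        {x : AlgebraicClosure (ZMod 2) | x ^ (2 ^ Nat.gcd n k) = x ∧ T 1 (Nat.gcd n k) x = 0}) ∧
    (Even (k / Nat.gcd n k) →
      {x : AlgebraicClosure (ZMod 2) | x ^ (2 ^ n) = x ∧ T 1 k x = 0} =
        {x : AlgebraicClosure (ZMod 2) | x ^ (2 ^ Nat.gcd n k) = x}) := by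
  set d := Nat.gcd n k with hd
  have hdn : d ∣ n := Nat.gcd_dvd_left n k
  have hdk : d ∣ k := Nat.gcd_dvd_right n k
  have hkdm : d * (k / d) = k := Nat.mul_div_cancel' hdk
  -- common forward step: x in LHS implies A (X^d - 1) x = 0
  have fwd : ∀ x : FF, A (X ^ n - 1) x = 0 → A (P k) x = 0 → A (X ^ d - 1) x = 0 := by
    intro x h1 h2
    have hk' : A ((X : Polynomial (ZMod 2)) ^ k - 1) x = 0 := A_eq_zero_of_dvd (P_dvd k) h2
    exact ker_gcd n k x h1 hk'
  constructor
  · intro hodd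
    have hm1 : ((k / d : ℕ) : ZMod 2) = 1 := by
      obtain ⟨t, ht⟩ := hodd
      rw [ht]
      push_cast
      rw [show (2 : ZMod 2) = 0 by decide]
      ring
    have hPmod : (X ^ d - 1 : Polynomial (ZMod 2)) ∣ P k - P d := by
      have := P_mod d (k / d)
      rwa [hkdm, hm1, map_one, one_mul] at this
    ext x
    simp only [Set.mem_setOf_eq]
    rw [mem_iff, mem_iff]
    constructor
    · rintro ⟨h1, h2⟩
      have hdx := fwd x h1 h2
      refine ⟨hdx, ?_⟩
      have hz : A (P k - P d) x = 0 := A_eq_zero_of_dvd hPmod hdx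
      have : A (P d) x = A (P k) x - A (P k - P d) x := by
        rw [← A_sub]
        congr 1
        ring
      rw [this, h2, hz, sub_zero]
    · rintro ⟨h1, h2⟩
      refine ⟨A_eq_zero_of_dvd (X_pow_sub_one_dvd hdn) h1, ?_⟩
      have hz : A (P k - P d) x = 0 := A_eq_zero_of_dvd hPmod h1
      have : A (P k) x = A (P d) x + A (P k - P d) x := by
        rw [← A_add]
        congr 1
        ring
      rw [this, h2, hz, add_zero]
  · intro heven
    have hm0 : ((k / d : ℕ) : ZMod 2) = 0 := by
      obtain ⟨t, ht⟩ := heven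
      rw [ht]
      push_cast
      rw [← two_mul, show (2 : ZMod 2) = 0 by decide, zero_mul]
    have hPk : (X ^ d - 1 : Polynomial (ZMod 2)) ∣ P k := by
      have := P_mod d (k / d)
      rwa [hkdm, hm0, map_zero, zero_mul, sub_zero] at this
    ext x
    simp only [Set.mem_setOf_eq]
    rw [mem_iff, show (x ^ 2 ^ d = x) ↔ A (X ^ d - 1) x = 0 by
      rw [A_X_pow_sub_one, sub_eq_zero]]
    constructor
    · rintro ⟨h1, h2⟩
      exact fwd x h1 h2
    · intro h1
      exact ⟨A_eq_zero_of_dvd (X_pow_sub_one_dvd hdn) h1,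
        A_eq_zero_of_dvd hPk h1⟩
end

section
/- Let l | k, n be a positive integer, d = gcd(n,k). If k / lcm(d, l) is even then { x ∈ GF(2^n) : T_l^k(x) = 0 } = GF(2^d); if k / lcm(d, l) is odd then { x ∈ GF(2^n) : T_l^k(x) = 0 } = { x + x^{2^{gcd(d,l)}} : x ∈ GF(2^d) }. -/
/-!
Let `d = gcd n k` and `e = gcd d l`. Telescoping gives
`T_l^k(x) ^ (2 ^ l) - T_l^k(x) = x ^ (2 ^ k) - x`, so a zero of `T_l^k` in `GF(2^n)` lies in
`GF(2^n) ∩ GF(2^k) = GF(2^d)`. On `GF(2^d)` the term `x ^ (2 ^ (l * i))` depends only on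
`l * i mod d`; this has period `d / e` in `i`, and as `l / e` is a unit modulo `d / e`, each period
runs once through the multiples of `e`. Hence `T_l^k = (k / lcm(d, l)) • T_e^d` on `GF(2^d)`: it
vanishes identically when the factor is even and is the trace `GF(2^d) → GF(2^e)` when it is odd.
The kernel of that trace contains the image of `y ↦ y + y ^ (2 ^ e)` on `GF(2^d)`, a group of
order `2 ^ d / 2 ^ e` because the kernel of the map is `GF(2^e)`; and it has at most
`2 ^ (d - e)` elements, being the root set of a nonzero polynomial of that degree. So the two
coincide.
-/

open Finset Function Polynomial

namespace Function.Periodic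

variable {M : Type*} [AddCommMonoid M] {f : ℕ → M} {r : ℕ}

theorem sum_range_mul (hf : Periodic f r) (q : ℕ) :
    ∑ i ∈ range (q * r), f i = q • ∑ i ∈ range r, f i := by
  induction q with
  | zero => simp
  | succ q ih =>
    rw [Nat.succ_mul, sum_range_add, ih, succ_nsmul]
    congr 1
    refine sum_congr rfl fun i _ => ?_
    rw [add_comm]
    exact hf.nat_mul q i

theorem sum_range_comp_mul (hf : Periodic f r) {c : ℕ} (hc : c.Coprime r) :
    ∑ i ∈ range r, f (c * i) = ∑ i ∈ range r, f i := by
  have hinj : Set.InjOn (fun i => c * i % r) (range r) := by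
    intro i hi j hj hij
    have := Nat.ModEq.cancel_left_of_coprime (Nat.coprime_comm.mp hc) hij
    rwa [Nat.ModEq, Nat.mod_eq_of_lt (mem_range.mp hi), Nat.mod_eq_of_lt (mem_range.mp hj)] at this
  have himage : (range r).image (fun i => c * i % r) = range r := by
    refine eq_of_subset_of_card_le (fun j hj => ?_) (card_image_of_injOn hinj).ge
    obtain ⟨i, hi, rfl⟩ := mem_image.mp hj
    exact mem_range.mpr (Nat.mod_lt _ (pos_of_ne_zero (by rintro rfl; simp at hi)))
  calc ∑ i ∈ range r, f (c * i) = ∑ i ∈ range r, f (c * i % r) := by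
        simp only [hf.map_mod_nat]
    _ = ∑ i ∈ range r, f i := by rw [← sum_image hinj, himage]

end Function.Periodic

section PowPow

variable {M : Type*} [Monoid M] {x : M} {p a b : ℕ}

theorem isPeriodicPt_pow_iff (n : ℕ) : IsPeriodicPt (· ^ p) n x ↔ x ^ p ^ n = x := by
  rw [IsPeriodicPt, IsFixedPt, pow_iterate]

theorem pow_pow_eq_self_of_dvd (ha : x ^ p ^ a = x) (hab : a ∣ b) : x ^ p ^ b = x := by
  obtain ⟨c, rfl⟩ := hab
  exact (isPeriodicPt_pow_iff _).mp (((isPeriodicPt_pow_iff a).mpr ha).mul_const c)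

theorem pow_pow_gcd_eq_self (ha : x ^ p ^ a = x) (hb : x ^ p ^ b = x) :
    x ^ p ^ Nat.gcd a b = x :=
  (isPeriodicPt_pow_iff _).mp
    (((isPeriodicPt_pow_iff a).mpr ha).gcd ((isPeriodicPt_pow_iff b).mpr hb))

theorem periodic_pow_pow (hx : x ^ p ^ a = x) : Periodic (fun m => x ^ p ^ m) a := fun m => by
  dsimp only
  rw [pow_add, mul_comm, pow_mul, hx]

end PowPow

section TField

variable {F : Type*} [Field F] {l k d : ℕ}

theorem T_eq_nsmul_T_gcd (hl : 0 < l) (hlk : l ∣ k) (hdk : d ∣ k) {x : F} (hx : x ^ 2 ^ d = x) :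
    T l k x = (k / Nat.lcm d l) • T (Nat.gcd d l) d x := by
  set e := Nat.gcd d l
  set r := d / e
  have hed : e ∣ d := Nat.gcd_dvd_left d l
  have hel : e ∣ l := Nat.gcd_dvd_right d l
  have hcop : (l / e).Coprime r :=
    (Nat.coprime_div_gcd_div_gcd (Nat.gcd_pos_of_pos_right d hl)).symm
  have her : e * r = d := Nat.mul_div_cancel' hed
  have hlr : l * r = l / e * d := by
    rw [← her, ← mul_assoc, Nat.div_mul_cancel hel]
  have hlcm : Nat.lcm d l = l * r := by
    rw [Nat.lcm, ← Nat.mul_div_assoc l hed, mul_comm]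
  have hperiod : Periodic (fun m => x ^ 2 ^ m) d := periodic_pow_pow hx
  have hlperiod : Periodic (fun i => x ^ 2 ^ (l * i)) r := fun i => by
    simp only [mul_add, hlr]
    exact hperiod.nat_mul _ _
  have heperiod : Periodic (fun i => x ^ 2 ^ (e * i)) r := fun i => by
    simp only [mul_add, her]
    exact hperiod _
  have hr : r ∣ k / l := Nat.dvd_div_of_mul_dvd (hlcm ▸ Nat.lcm_dvd hdk hlk)
  calc T l k x = ∑ i ∈ range (k / l / r * r), x ^ 2 ^ (l * i) := by
        rw [Nat.div_mul_cancel hr]; rfl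
    _ = (k / Nat.lcm d l) • ∑ i ∈ range r, x ^ 2 ^ (e * (l / e * i)) := by
        simp only [hlperiod.sum_range_mul, Nat.div_div_eq_div_mul, hlcm, ← mul_assoc,
          Nat.mul_div_cancel' hel]
    _ = (k / Nat.lcm d l) • T e d x := congrArg _ (heperiod.sum_range_comp_mul hcop)

theorem T_pow_two_pow_sub_T (hlk : l ∣ k) (x : F) :
    T l k (x ^ 2 ^ l) - T l k x = x ^ 2 ^ k - x := by
  have hshift (i : ℕ) : (x ^ 2 ^ l) ^ 2 ^ (l * i) = x ^ 2 ^ (l * (i + 1)) := by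
    rw [← pow_mul, ← pow_add, mul_add_one, add_comm]
  simp only [T, ← sum_sub_distrib, hshift]
  rw [sum_range_sub (fun i => x ^ 2 ^ (l * i)), Nat.mul_div_cancel' hlk, mul_zero, pow_zero,
    pow_one]

end TField

section CharTwo

variable {F : Type*} [Field F] [CharP F 2] {l k d e m : ℕ}

theorem T_add (x y : F) : T l k (x + y) = T l k x + T l k y := by
  simp only [T, add_pow_char_pow, sum_add_distrib]

theorem T_pow_two_pow (x : F) (m : ℕ) : T l k x ^ 2 ^ m = T l k (x ^ 2 ^ m) := by
  simp only [T, sum_pow_char_pow, ← pow_mul, mul_comm]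

theorem pow_two_pow_eq_self_of_T_eq_zero (hlk : l ∣ k) {x : F} (hx : T l k x = 0) :
    x ^ 2 ^ k = x := by
  rw [← sub_eq_zero, ← T_pow_two_pow_sub_T hlk, ← T_pow_two_pow, hx, sub_zero,
    zero_pow (by positivity)]

theorem T_add_pow_two_pow_eq_zero (hed : e ∣ d) {y : F} (hy : y ^ 2 ^ d = y) :
    T e d (y + y ^ 2 ^ e) = 0 := by
  rw [T_add, ← CharTwo.sub_eq_add, ← neg_sub, T_pow_two_pow_sub_T hed, hy, sub_self, neg_zero]

end CharTwo

section ArtinSchreier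

variable (F : Type*) [Field F] [CharP F 2]

/-- In characteristic 2 this is the Artin–Schreier map `y ↦ y ^ 2 ^ m - y`. -/
def artinSchreier (m : ℕ) : F →+ F where
  toFun y := y + y ^ 2 ^ m
  map_zero' := by simp
  map_add' x y := by rw [add_pow_char_pow]; ring

variable {F} {m : ℕ}

theorem mem_ker_artinSchreier {y : F} : y ∈ (artinSchreier F m).ker ↔ y ^ 2 ^ m = y :=
  CharTwo.add_eq_zero.trans eq_comm

theorem ker_artinSchreier_mono {e d : ℕ} (hed : e ∣ d) :
    (artinSchreier F e).ker ≤ (artinSchreier F d).ker := fun _ hy =>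
  mem_ker_artinSchreier.mpr (pow_pow_eq_self_of_dvd (mem_ker_artinSchreier.mp hy) hed)

theorem card_ker_artinSchreier [IsAlgClosed F] (hm : 0 < m) :
    Nat.card (artinSchreier F m).ker = 2 ^ m := by
  have hroots : ((artinSchreier F m).ker : Set F) = (X ^ 2 ^ m - X : F[X]).rootSet F := by
    ext y
    rw [SetLike.mem_coe, mem_ker_artinSchreier, mem_rootSet,
      and_iff_right (FiniteField.X_pow_card_pow_sub_X_ne_zero F hm.ne' one_lt_two)]
    simp [sub_eq_zero]
  rw [← SetLike.coe_sort_coe, hroots, Nat.card_eq_fintype_card,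
    card_rootSet_eq_natDegree (galois_poly_separable 2 _ (dvd_pow_self 2 hm.ne'))
      (by rw [Algebra.algebraMap_self, Polynomial.map_id]; exact IsAlgClosed.splits _),
    FiniteField.X_pow_card_pow_sub_X_natDegree_eq F hm.ne' one_lt_two]

theorem card_map_artinSchreier [IsAlgClosed F] {e d : ℕ} (hd : 0 < d) (hed : e ∣ d) :
    Nat.card ((artinSchreier F d).ker.map (artinSchreier F e)) = 2 ^ (d - e) := by
  set φ := (artinSchreier F e).domRestrict (artinSchreier F d).ker
  have hker : Nat.card φ.ker = 2 ^ e := by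
    rw [AddMonoidHom.ker_domRestrict,
      Nat.card_congr (AddSubgroup.addSubgroupOfEquivOfLe (ker_artinSchreier_mono hed)).toEquiv,
      card_ker_artinSchreier (Nat.pos_of_dvd_of_pos hed hd)]
  have hcard := φ.ker.card_mul_index
  rw [hker, AddSubgroup.index_ker, AddMonoidHom.domRestrict_range,
    card_ker_artinSchreier hd] at hcard
  apply Nat.eq_of_mul_eq_mul_left (pow_pos two_pos e)
  rw [hcard, ← pow_add, Nat.add_sub_cancel' (Nat.le_of_dvd hd hed)]

end ArtinSchreier

section TPoly

variable (F : Type*) [Field F]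

noncomputable def TPoly (l k : ℕ) : F[X] :=
  ∑ i ∈ range (k / l), X ^ 2 ^ (l * i)

variable {F} {l k : ℕ}

theorem eval_TPoly (x : F) : (TPoly F l k).eval x = T l k x := by
  simp [TPoly, T, eval_finsetSum]

theorem natDegree_TPoly_le (hlk : l ∣ k) : (TPoly F l k).natDegree ≤ 2 ^ (k - l) := by
  refine natDegree_sum_le_of_forall_le _ _ fun i hi => ?_
  rw [natDegree_X_pow]
  refine Nat.pow_le_pow_right two_pos ?_
  rw [← Nat.mul_div_cancel' hlk, ← Nat.mul_sub_one]
  exact Nat.mul_le_mul_left l (Nat.le_sub_one_of_lt (mem_range.mp hi))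

theorem coeff_TPoly_two_pow_sub (hk : 0 < k) (hlk : l ∣ k) :
    (TPoly F l k).coeff (2 ^ (k - l)) = 1 := by
  have hl : 0 < l := Nat.pos_of_dvd_of_pos hlk hk
  have hq : 0 < k / l := Nat.div_pos (Nat.le_of_dvd hk hlk) hl
  have htop : k - l = l * (k / l - 1) := by
    rw [Nat.mul_sub_one, Nat.mul_div_cancel' hlk]
  have hexp (i : ℕ) : 2 ^ (k - l) = 2 ^ (l * i) ↔ k / l - 1 = i := by
    rw [Nat.pow_right_inj one_lt_two, htop, Nat.mul_right_inj hl.ne']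
  simp only [TPoly, finsetSum_coeff, coeff_X_pow, hexp, sum_ite_eq, mem_range]
  simp [hq]

theorem TPoly_ne_zero (hk : 0 < k) (hlk : l ∣ k) : TPoly F l k ≠ 0 := fun h => by
  simpa [h] using coeff_TPoly_two_pow_sub (F := F) hk hlk

theorem setOf_T_eq_zero_eq_rootSet (hk : 0 < k) (hlk : l ∣ k) :
    {x : F | T l k x = 0} = (TPoly F l k).rootSet F := by
  ext x
  rw [mem_rootSet, and_iff_right (TPoly_ne_zero hk hlk), coe_aeval_eq_eval, eval_TPoly]
  rfl

end TPoly

theorem setOf_T_eq_zero_eq_image {F : Type*} [Field F] [CharP F 2] [IsAlgClosed F] {e d : ℕ}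
    (hd : 0 < d) (hed : e ∣ d) :
    {x : F | T e d x = 0} = (fun y => y + y ^ 2 ^ e) '' {y | y ^ 2 ^ d = y} := by
  have himage : (fun y : F => y + y ^ 2 ^ e) '' {y | y ^ 2 ^ d = y} =
      (artinSchreier F d).ker.map (artinSchreier F e) := by
    rw [AddSubgroup.coe_map]
    congr
    ext y
    exact mem_ker_artinSchreier.symm
  rw [himage, setOf_T_eq_zero_eq_rootSet hd hed]
  symm
  refine Set.eq_of_subset_of_ncard_le ?_ ?_ (rootSet_finite _ _)
  · rintro _ ⟨y, hy, rfl⟩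
    rw [← setOf_T_eq_zero_eq_rootSet hd hed]
    exact T_add_pow_two_pow_eq_zero hed (mem_ker_artinSchreier.mp hy)
  · calc ((TPoly F e d).rootSet F).ncard ≤ 2 ^ (d - e) :=
          (ncard_rootSet_le _ _).trans (natDegree_TPoly_le hed)
      _ = Nat.card ((artinSchreier F d).ker.map (artinSchreier F e)) :=
          (card_map_artinSchreier hd hed).symm
      _ = _ := Nat.card_coe_set_eq _

theorem stmt_14_general (n l k : ℕ) (hl : 0 < l) (hk : 0 < k) (hlk : l ∣ k) :
    (Even (k / Nat.lcm (Nat.gcd n k) l) →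
      {x : AlgebraicClosure (ZMod 2) | x ^ (2 ^ n) = x ∧ T l k x = 0} =
        {x : AlgebraicClosure (ZMod 2) | x ^ (2 ^ Nat.gcd n k) = x}) ∧
    (Odd (k / Nat.lcm (Nat.gcd n k) l) →
      {x : AlgebraicClosure (ZMod 2) | x ^ (2 ^ n) = x ∧ T l k x = 0} =
        (fun x : AlgebraicClosure (ZMod 2) => x + x ^ (2 ^ Nat.gcd (Nat.gcd n k) l)) ''
          {x : AlgebraicClosure (ZMod 2) | x ^ (2 ^ Nat.gcd n k) = x}) := by
  set d := Nat.gcd n k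
  set q := k / Nat.lcm d l
  have hd : 0 < d := Nat.gcd_pos_of_pos_right n hk
  have hdk : d ∣ k := Nat.gcd_dvd_right n k
  have hed : Nat.gcd d l ∣ d := Nat.gcd_dvd_left d l
  have hreduce : {x : AlgebraicClosure (ZMod 2) | x ^ 2 ^ n = x ∧ T l k x = 0} =
      {x | x ^ 2 ^ d = x ∧ q • T (Nat.gcd d l) d x = 0} := by
    ext x
    simp only [Set.mem_ofPred_eq]
    constructor
    · rintro ⟨hxn, hxT⟩
      have hxd := pow_pow_gcd_eq_self hxn (pow_two_pow_eq_self_of_T_eq_zero hlk hxT)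
      exact ⟨hxd, T_eq_nsmul_T_gcd hl hlk hdk hxd ▸ hxT⟩
    · rintro ⟨hxd, hxT⟩
      exact ⟨pow_pow_eq_self_of_dvd hxd (Nat.gcd_dvd_left n k),
        T_eq_nsmul_T_gcd hl hlk hdk hxd ▸ hxT⟩
  simp only [hreduce, nsmul_eq_mul, CharTwo.natCast_eq_ite]
  constructor
  · intro hq
    simp [hq]
  · intro hq
    simp only [Nat.not_even_iff_odd.mpr hq, if_false, one_mul]
    rw [← setOf_T_eq_zero_eq_image hd hed]
    ext x
    exact ⟨And.right, fun hx => ⟨pow_two_pow_eq_self_of_T_eq_zero hed hx, hx⟩⟩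

theorem stmt_14 (n l k : ℕ) (hn : 0 < n) (hl : 0 < l) (hk : 0 < k) (hlk : l ∣ k) :
    (Even (k / Nat.lcm (Nat.gcd n k) l) →
      {x : AlgebraicClosure (ZMod 2) | x ^ (2 ^ n) = x ∧ T l k x = 0} =
        {x : AlgebraicClosure (ZMod 2) | x ^ (2 ^ Nat.gcd n k) = x}) ∧
    (Odd (k / Nat.lcm (Nat.gcd n k) l) →
      {x : AlgebraicClosure (ZMod 2) | x ^ (2 ^ n) = x ∧ T l k x = 0} =
        (fun x : AlgebraicClosure (ZMod 2) => x + x ^ (2 ^ Nat.gcd (Nat.gcd n k) l)) ''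
          {x : AlgebraicClosure (ZMod 2) | x ^ (2 ^ Nat.gcd n k) = x}) :=
  stmt_14_general n l k hl hk hlk
end

section
/- Let L be a positive integer, a a nonzero element of GF(2^L), and ξ an element of the algebraic closure of GF(2) with ξ^{2^L + 1} = 1 and ξ ≠ 1. Then the coset a/(ξ+1) + GF(2^L) equals the set { a/(ξ'+1) : ξ'^{2^L+1} = 1, ξ' ≠ 1 }. -/
/-!
In characteristic 2 the map `T y = y ^ 2 ^ L + y` is additive with kernel `GF(2^L)`, so the coset
`a / (ξ + 1) + GF(2^L)` is the fibre `T⁻¹ {a}` as soon as `T (a / (ξ + 1)) = a`. This holds for every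
`ξ ≠ 1` with `ξ ^ (2 ^ L + 1) = 1`, because then `ξ ^ 2 ^ L = ξ⁻¹`. Conversely `y ↦ a / y + 1` sends
each `y ∈ T⁻¹ {a}` to such a root of unity `ξ'`, with `y = a / (ξ' + 1)`.
-/

section CharTwo

variable {R : Type*} [CommRing R] [CharP R 2] (L : ℕ)

theorem pow_two_pow_add_self_eq_iff {y₀ y : R} :
    y ^ 2 ^ L + y = y₀ ^ 2 ^ L + y₀ ↔ ∃ b, b ^ 2 ^ L = b ∧ y = y₀ + b := by
  constructor
  · intro h
    refine ⟨y + y₀, ?_, by linear_combination -y₀ * CharTwo.two_eq_zero (R := R)⟩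
    rw [add_pow_char_pow]
    linear_combination h + (y₀ ^ 2 ^ L - y) * CharTwo.two_eq_zero (R := R)
  · rintro ⟨b, hb, rfl⟩
    rw [add_pow_char_pow, hb]
    linear_combination b * CharTwo.two_eq_zero (R := R)

end CharTwo

section FieldCharTwo

variable {K : Type*} [Field K] [CharP K 2] (L : ℕ)

theorem div_add_one_pow_two_pow_add_self {a ξ : K} (haL : a ^ 2 ^ L = a)
    (hξ : ξ ^ (2 ^ L + 1) = 1) (hξ1 : ξ ≠ 1) :
    (a / (ξ + 1)) ^ 2 ^ L + a / (ξ + 1) = a := by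
  have hξ0 : ξ + 1 ≠ 0 := fun h => hξ1 (CharTwo.add_eq_zero.1 h)
  have hξq : ξ ^ 2 ^ L * ξ = 1 := by rw [← pow_succ, hξ]
  have hξq0 : ξ ^ 2 ^ L + 1 ≠ 0 := by
    rw [← one_pow (2 ^ L), ← add_pow_char_pow]
    exact pow_ne_zero _ hξ0
  rw [div_pow, haL, add_pow_char_pow, one_pow]
  field_simp
  linear_combination -a * hξq

theorem exists_eq_div_add_one_of_pow_two_pow_add_self {a y : K} (haL : a ^ 2 ^ L = a)
    (ha : a ≠ 0) (hy : y ^ 2 ^ L + y = a) :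
    ∃ ξ : K, ξ ^ (2 ^ L + 1) = 1 ∧ ξ ≠ 1 ∧ y = a / (ξ + 1) := by
  have hy0 : y ≠ 0 := by
    rintro rfl
    exact ha (by simpa using hy.symm)
  refine ⟨a / y + 1, ?_, ?_, ?_⟩
  · have hyq : y ^ 2 ^ L ≠ 0 := pow_ne_zero _ hy0
    rw [pow_succ, add_pow_char_pow, div_pow, haL, one_pow]
    field_simp
    linear_combination a * hy + a ^ 2 * CharTwo.two_eq_zero (R := K)
  · simpa using div_ne_zero ha hy0
  · rw [CharTwo.add_cancel_right, div_div_cancel₀ ha]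

end FieldCharTwo

theorem stmt_15_general (L : ℕ) (a ξ : AlgebraicClosure (ZMod 2))
    (haL : a ^ (2 ^ L) = a) (ha : a ≠ 0)
    (hξ : ξ ^ (2 ^ L + 1) = 1) (hξ1 : ξ ≠ 1) :
    {y : AlgebraicClosure (ZMod 2) | ∃ b, b ^ (2 ^ L) = b ∧ y = a / (ξ + 1) + b} =
      {y : AlgebraicClosure (ZMod 2) |
        ∃ ξ' : AlgebraicClosure (ZMod 2),
          ξ' ^ (2 ^ L + 1) = 1 ∧ ξ' ≠ 1 ∧ y = a / (ξ' + 1)} := by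
  have hfibre : ∀ y : AlgebraicClosure (ZMod 2),
      (∃ b, b ^ 2 ^ L = b ∧ y = a / (ξ + 1) + b) ↔ y ^ 2 ^ L + y = a := fun y => by
    rw [← pow_two_pow_add_self_eq_iff, div_add_one_pow_two_pow_add_self L haL hξ hξ1]
  ext y
  simp only [Set.mem_ofPred_eq, hfibre]
  constructor
  · exact exists_eq_div_add_one_of_pow_two_pow_add_self L haL ha
  · rintro ⟨ξ', hξ', hξ'1, rfl⟩
    exact div_add_one_pow_two_pow_add_self L haL hξ' hξ'1

theorem stmt_15 (L : ℕ) (hL : 0 < L) (a ξ : AlgebraicClosure (ZMod 2))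
    (haL : a ^ (2 ^ L) = a) (ha : a ≠ 0)
    (hξ : ξ ^ (2 ^ L + 1) = 1) (hξ1 : ξ ≠ 1) :
    {y : AlgebraicClosure (ZMod 2) | ∃ b, b ^ (2 ^ L) = b ∧ y = a / (ξ + 1) + b} =
      {y : AlgebraicClosure (ZMod 2) |
        ∃ ξ' : AlgebraicClosure (ZMod 2),
          ξ' ^ (2 ^ L + 1) = 1 ∧ ξ' ≠ 1 ∧ y = a / (ξ' + 1)} :=
  stmt_15_general L a ξ haL ha hξ hξ1
end

section
/- Let n, k be positive integers, d = gcd(n,k), and a ∈ GF(2^n). The equation x^{2^k} + x = a has a solution in GF(2^n) if and only if T_d^n(a) = 0, and in that case it has exactly 2^d solutions in GF(2^n). -/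
/-!
Let `d = gcd n k`, `S = {x | x^(2^n) = x}` (a copy of `GF(2^n)`) and `L x = x^(2^k) + x`.
`L` is additive on `S`, with kernel `GF(2^d)` because the periods of a point under the Frobenius
map are closed under `gcd`. So each nonempty fibre of `L` on `S` is a coset of `GF(2^d)`, and the
image `L(S)` has `2^(n-d)` elements. Since `T_d^n` is invariant under `x ↦ x^(2^d)` on `S`, and
hence under `x ↦ x^(2^k)`, it vanishes on `L(S)`; being a polynomial of degree `2^(n-d)`, it has
no other zeros, so `L(S)` is exactly the zero set of `T_d^n` in `S`.
-/

open Finset Polynomial Function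

theorem Set.ncard_le_mul_ncard_image {α β : Type*} {f : α → β} {s : Set α} (hs : s.Finite)
    (c : ℕ) (hc : ∀ b ∈ f '' s, {a ∈ s | f a = b}.ncard ≤ c) :
    s.ncard ≤ c * (f '' s).ncard := by
  classical
  lift s to Finset α using hs
  rw [← Finset.coe_image] at hc ⊢
  simp only [Set.ncard_coe_finset, Finset.mem_coe] at hc ⊢
  refine Finset.card_le_mul_card_image s c fun b hb => ?_
  simpa [← Finset.coe_filter] using hc b hb

variable {F : Type*} [Field F]

section Trace

theorem T_eq_eval (l m : ℕ) (x : F) :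
    T l m x = (∑ i ∈ range (m / l), X ^ 2 ^ (l * i) : F[X]).eval x := by
  simp [T, eval_finsetSum]

theorem setOf_T_eq_zero_finite_and_ncard_le {l m : ℕ} (hl : 0 < l) (hlm : l ∣ m) (hm : 0 < m) :
    {x : F | T l m x = 0}.Finite ∧ {x : F | T l m x = 0}.ncard ≤ 2 ^ (m - l) := by
  classical
  set p : F[X] := ∑ i ∈ range (m / l), X ^ 2 ^ (l * i)
  have hq : 0 < m / l := Nat.div_pos (Nat.le_of_dvd hm hlm) hl
  have hp1 : p.coeff 1 = 1 := by
    rw [finsetSum_coeff, sum_eq_single_of_mem 0 (mem_range.2 hq)]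
    · simp
    · intro i _ hi
      rw [coeff_X_pow, if_neg]
      exact (Nat.one_lt_two_pow (mul_ne_zero hl.ne' hi)).ne
  have hp0 : p ≠ 0 := fun h => by simp [h] at hp1
  have hdeg : p.natDegree ≤ 2 ^ (m - l) := by
    refine natDegree_sum_le_of_forall_le _ _ fun i hi => ?_
    rw [natDegree_X_pow]
    refine Nat.pow_le_pow_right two_pos ?_
    have := Nat.mul_le_mul_left l (Nat.le_sub_one_of_lt (mem_range.1 hi))
    rwa [Nat.mul_sub_one, Nat.mul_div_cancel' hlm] at this
  have hset : {x : F | T l m x = 0} = ↑p.roots.toFinset := by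
    ext x
    simp [T_eq_eval, mem_roots hp0, p]
  rw [hset]
  exact ⟨finite_toSet _, (Set.ncard_coe_finset _).trans_le
    ((Multiset.toFinset_card_le _).trans ((card_roots' p).trans hdeg))⟩

theorem T_pow_two_pow_eq {l m : ℕ} {x : F} (hlm : l ∣ m) (hx : x ^ 2 ^ m = x) :
    T l m (x ^ 2 ^ l) = T l m x := by
  set g : ℕ → F := fun i => x ^ 2 ^ (l * i)
  have hg : g (m / l) = g 0 := by simpa [g, Nat.mul_div_cancel' hlm] using hx
  have hshift := (sum_range_succ' g (m / l)).symm.trans (sum_range_succ g (m / l))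
  rw [hg, add_right_cancel_iff] at hshift
  simpa only [T, g, ← pow_mul, ← pow_succ', Nat.mul_succ, pow_add, mul_comm] using hshift

theorem T_pow_two_pow_eq_of_dvd {l m k : ℕ} {x : F} (hlm : l ∣ m) (hlk : l ∣ k)
    (hx : x ^ 2 ^ m = x) : T l m (x ^ 2 ^ k) = T l m x := by
  obtain ⟨c, rfl⟩ := hlk
  induction c with
  | zero => simp
  | succ c ih =>
    have hxc : (x ^ 2 ^ (l * c)) ^ 2 ^ m = x ^ 2 ^ (l * c) := by
      rw [← pow_mul, ← pow_add, add_comm, pow_add, pow_mul, hx]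
    rw [Nat.mul_succ, pow_add, pow_mul, T_pow_two_pow_eq hlm hxc, ih]

end Trace

section CharTwo

variable [CharP F 2] {x : F}

theorem T_pow_two_pow_add_self {l m k : ℕ} (hlm : l ∣ m) (hlk : l ∣ k) (hx : x ^ 2 ^ m = x) :
    T l m (x ^ 2 ^ k + x) = 0 := by
  simp only [T, add_pow_char_pow, sum_add_distrib]
  rw [← T, ← T, T_pow_two_pow_eq_of_dvd hlm hlk hx, CharTwo.add_self_eq_zero]

theorem isPeriodicPt_frobenius_two_iff {m : ℕ} :
    IsPeriodicPt (frobenius F 2) m x ↔ x ^ 2 ^ m = x := by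
  rw [IsPeriodicPt, IsFixedPt, iterate_frobenius]

theorem pow_two_pow_gcd_eq_self_iff {m n : ℕ} :
    x ^ 2 ^ Nat.gcd m n = x ↔ x ^ 2 ^ m = x ∧ x ^ 2 ^ n = x := by
  simp only [← isPeriodicPt_frobenius_two_iff]
  exact ⟨fun h => ⟨h.trans_dvd (Nat.gcd_dvd_left m n), h.trans_dvd (Nat.gcd_dvd_right m n)⟩,
    fun h => h.1.gcd h.2⟩

theorem fiber_pow_two_pow_add_self_eq {n k : ℕ} {x₀ : F} (hx₀ : x₀ ^ 2 ^ n = x₀) :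
    {x | x ^ 2 ^ n = x ∧ x ^ 2 ^ k + x = x₀ ^ 2 ^ k + x₀} =
      (· + x₀) '' {x | x ^ 2 ^ Nat.gcd n k = x} := by
  ext x
  rw [Set.image_add_right, Set.mem_preimage, CharTwo.neg_eq, Set.mem_ofPred_eq, Set.mem_ofPred_eq,
    pow_two_pow_gcd_eq_self_iff, add_pow_char_pow, add_pow_char_pow, hx₀, add_left_inj]
  grind

variable [IsAlgClosed F]

theorem setOf_pow_two_pow_eq_self_finite_and_ncard {m : ℕ} (hm : 0 < m) :
    {x : F | x ^ 2 ^ m = x}.Finite ∧ {x : F | x ^ 2 ^ m = x}.ncard = 2 ^ m := by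
  classical
  set p : F[X] := X ^ 2 ^ m - X
  have hp0 : p ≠ 0 := FiniteField.X_pow_card_pow_sub_X_ne_zero F hm.ne' one_lt_two
  have hset : {x : F | x ^ 2 ^ m = x} = p.rootSet F := by
    ext x
    simp [mem_rootSet, hp0, p, sub_eq_zero]
  have hcard := card_rootSet_eq_natDegree (K := F)
    (galois_poly_separable (K := F) 2 (2 ^ m) (dvd_pow_self 2 hm.ne')) (IsAlgClosed.splits _)
  rw [hset]
  refine ⟨(p.rootSet F).toFinite, ?_⟩
  rw [← Nat.card_coe_set_eq, Nat.card_eq_fintype_card, hcard,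
    FiniteField.X_pow_card_pow_sub_X_natDegree_eq F hm.ne' one_lt_two]

theorem ncard_fiber_pow_two_pow_add_self {n k : ℕ} (hn : 0 < n) {x₀ : F}
    (hx₀ : x₀ ^ 2 ^ n = x₀) :
    {x | x ^ 2 ^ n = x ∧ x ^ 2 ^ k + x = x₀ ^ 2 ^ k + x₀}.ncard = 2 ^ Nat.gcd n k := by
  rw [fiber_pow_two_pow_add_self_eq hx₀, Set.ncard_image_of_injective _ (add_left_injective x₀),
    (setOf_pow_two_pow_eq_self_finite_and_ncard (Nat.gcd_pos_of_pos_left k hn)).2]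

theorem image_pow_two_pow_add_self {n k : ℕ} (hn : 0 < n) :
    (fun x => x ^ 2 ^ k + x) '' {x : F | x ^ 2 ^ n = x} =
      {a | a ^ 2 ^ n = a ∧ T (Nat.gcd n k) n a = 0} := by
  set d := Nat.gcd n k
  have hdn : d ∣ n := Nat.gcd_dvd_left n k
  obtain ⟨hSfin, hS⟩ := setOf_pow_two_pow_eq_self_finite_and_ncard (F := F) hn
  obtain ⟨hTfin, hT⟩ :=
    setOf_T_eq_zero_finite_and_ncard_le (F := F) (Nat.gcd_pos_of_pos_left k hn) hdn hn
  have hsub : (fun x => x ^ 2 ^ k + x) '' {x : F | x ^ 2 ^ n = x} ⊆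
      {a | a ^ 2 ^ n = a ∧ T d n a = 0} := by
    rintro _ ⟨x, hx, rfl⟩
    refine ⟨?_, T_pow_two_pow_add_self hdn (Nat.gcd_dvd_right n k) hx⟩
    change (x ^ 2 ^ k + x) ^ 2 ^ n = x ^ 2 ^ k + x
    rw [add_pow_char_pow, ← pow_mul, mul_comm, pow_mul, hx]
  have hcount : 2 ^ d * 2 ^ (n - d) ≤
      2 ^ d * ((fun x => x ^ 2 ^ k + x) '' {x : F | x ^ 2 ^ n = x}).ncard := by
    calc 2 ^ d * 2 ^ (n - d) = {x : F | x ^ 2 ^ n = x}.ncard := by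
          rw [hS, ← pow_add, Nat.add_sub_cancel' (Nat.le_of_dvd hn hdn)]
      _ ≤ _ := by
          refine Set.ncard_le_mul_ncard_image hSfin _ ?_
          rintro _ ⟨x₀, hx₀, rfl⟩
          exact (ncard_fiber_pow_two_pow_add_self hn hx₀).le
  refine Set.eq_of_subset_of_ncard_le hsub ?_ (hTfin.subset fun a ha => ha.2)
  calc _ ≤ {x : F | T d n x = 0}.ncard := Set.ncard_le_ncard (fun a ha => ha.2) hTfin
    _ ≤ 2 ^ (n - d) := hT
    _ ≤ _ := Nat.le_of_mul_le_mul_left hcount (by positivity)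

end CharTwo

theorem stmt_17_general (n k : ℕ) (hn : 0 < n)
    (a : AlgebraicClosure (ZMod 2)) (ha : a ^ (2 ^ n) = a) :
    ((∃ x : AlgebraicClosure (ZMod 2), x ^ (2 ^ n) = x ∧ x ^ (2 ^ k) + x = a) ↔
        T (Nat.gcd n k) n a = 0) ∧
    (T (Nat.gcd n k) n a = 0 →
      Set.ncard {x : AlgebraicClosure (ZMod 2) | x ^ (2 ^ n) = x ∧ x ^ (2 ^ k) + x = a} =
        2 ^ Nat.gcd n k) := by
  have hsolvable := Set.ext_iff.1 (image_pow_two_pow_add_self (F := AlgebraicClosure (ZMod 2))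
    (k := k) hn) a
  simp only [Set.mem_image, Set.mem_ofPred_eq, ha, true_and] at hsolvable
  refine ⟨hsolvable, fun hT => ?_⟩
  obtain ⟨x₀, hx₀, rfl⟩ := hsolvable.2 hT
  exact ncard_fiber_pow_two_pow_add_self hn hx₀

theorem stmt_17 (n k : ℕ) (hn : 0 < n) (hk : 0 < k)
    (a : AlgebraicClosure (ZMod 2)) (ha : a ^ (2 ^ n) = a) :
    ((∃ x : AlgebraicClosure (ZMod 2), x ^ (2 ^ n) = x ∧ x ^ (2 ^ k) + x = a) ↔
        T (Nat.gcd n k) n a = 0) ∧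
    (T (Nat.gcd n k) n a = 0 →
      Set.ncard {x : AlgebraicClosure (ZMod 2) | x ^ (2 ^ n) = x ∧ x ^ (2 ^ k) + x = a} =
        2 ^ Nat.gcd n k) :=
  stmt_17_general n k hn a ha
end

section
/- Let n, k be positive integers, d = gcd(n,k), a ∈ GF(2^n) with T_d^n(a) = 0, k/d odd, and let ξ be a (2^n+1)-th root of unity with ξ ≠ 1 in the algebraic closure of GF(2). Then x₀ = T_k^{lcm(n,k)}(a/(ξ+1)) lies in GF(2^n) and satisfies x₀^{2^k} + x₀ = a; moreover the set of solutions in GF(2^n) of x^{2^k} + x = a is x₀ + GF(2^d). -/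
section aux

variable {F : Type*} [Field F] [CharP F 2]

private lemma qq (x : F) (s t : ℕ) : (x ^ 2 ^ s) ^ 2 ^ t = x ^ 2 ^ (s + t) := by
  rw [← pow_mul, ← pow_add]

private lemma qadd (x y : F) (m : ℕ) : (x + y) ^ 2 ^ m = x ^ 2 ^ m + y ^ 2 ^ m :=
  add_pow_char_pow x y 2 m

private lemma qsum {ι : Type*} (s : Finset ι) (f : ι → F) (m : ℕ) :
    (∑ i ∈ s, f i) ^ 2 ^ m = ∑ i ∈ s, (f i) ^ 2 ^ m := by
  induction s using Finset.cons_induction with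
  | empty => simp [zero_pow (by positivity : (2:ℕ) ^ m ≠ 0)]
  | cons a s ha ih => rw [Finset.sum_cons, Finset.sum_cons, qadd, ih]

private lemma qmul (x : F) {m : ℕ} (h : x ^ 2 ^ m = x) (t : ℕ) : x ^ 2 ^ (m * t) = x := by
  induction t with
  | zero => simp
  | succ t ih => rw [Nat.mul_succ, ← qq, ih, h]

private lemma qinj (m : ℕ) : Function.Injective (fun x : F => x ^ 2 ^ m) := by
  intro x y h
  simp only at h
  have h0 : (x + y) ^ 2 ^ m = 0 := by rw [qadd, h, CharTwo.add_self_eq_zero]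
  have h1 : x + y = 0 := (pow_eq_zero_iff (by positivity : (2:ℕ) ^ m ≠ 0)).mp h0
  have h2 := eq_neg_of_add_eq_zero_left h1
  rwa [CharTwo.neg_eq] at h2

private lemma qsub (x : F) {m l : ℕ} (hml : x ^ 2 ^ (m + l) = x) (hm : x ^ 2 ^ m = x) :
    x ^ 2 ^ l = x := by
  have h : (x ^ 2 ^ l) ^ 2 ^ m = x ^ 2 ^ m := by rw [qq, Nat.add_comm l m, hml, hm]
  exact qinj m h

private lemma qgcd (x : F) (n : ℕ) : ∀ k, x ^ 2 ^ n = x → x ^ 2 ^ k = x →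
    x ^ 2 ^ Nat.gcd n k = x := by
  induction n using Nat.strong_induction_on with
  | _ n ih =>
    intro k hn hk
    rcases Nat.eq_zero_or_pos n with h0 | h0
    · subst h0; simpa using hk
    · rw [Nat.gcd_rec]
      refine ih (k % n) (Nat.mod_lt _ h0) n ?_ hn
      have h1 : x ^ 2 ^ (n * (k / n)) = x := qmul x hn _
      have h2 : x ^ 2 ^ (n * (k / n) + k % n) = x := by rw [Nat.div_add_mod]; exact hk
      exact qsub x h2 h1

private lemma qmod (x : F) {n : ℕ} (h : x ^ 2 ^ n = x) (j : ℕ) :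
    x ^ 2 ^ j = x ^ 2 ^ (j % n) := by
  conv_lhs => rw [← Nat.mod_add_div j n]
  rw [← qq]
  apply qmul
  rw [qq, Nat.add_comm (j % n) n, ← qq, h]

end aux

theorem stmt_18 (n k : ℕ) (hn : 0 < n) (hk : 0 < k) (hodd : Odd (k / Nat.gcd n k))
    (a ξ : AlgebraicClosure (ZMod 2)) (ha : a ^ (2 ^ n) = a)
    (hTa : T (Nat.gcd n k) n a = 0)
    (hξ : ξ ^ (2 ^ n + 1) = 1) (hξ1 : ξ ≠ 1) :
    (T k (Nat.lcm n k) (a / (ξ + 1))) ^ (2 ^ n) = T k (Nat.lcm n k) (a / (ξ + 1)) ∧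
    (T k (Nat.lcm n k) (a / (ξ + 1))) ^ (2 ^ k) + T k (Nat.lcm n k) (a / (ξ + 1)) = a ∧
    {x : AlgebraicClosure (ZMod 2) | x ^ (2 ^ n) = x ∧ x ^ (2 ^ k) + x = a} =
      (fun b : AlgebraicClosure (ZMod 2) => T k (Nat.lcm n k) (a / (ξ + 1)) + b) ''
        {b : AlgebraicClosure (ZMod 2) | b ^ (2 ^ Nat.gcd n k) = b} := by
  have htwo : (2 : AlgebraicClosure (ZMod 2)) = 0 := CharTwo.two_eq_zero
  set d := Nat.gcd n k with hd_def
  have hd : 0 < d := Nat.gcd_pos_of_pos_left k hn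
  have hdn : d ∣ n := Nat.gcd_dvd_left n k
  have hdk : d ∣ k := Nat.gcd_dvd_right n k
  set m := n / d with hm_def
  set c := k / d with hc_def
  have hn' : d * m = n := Nat.mul_div_cancel' hdn
  have hk' : d * c = k := Nat.mul_div_cancel' hdk
  have hm : 0 < m := Nat.div_pos (Nat.le_of_dvd hn hdn) hd
  have hL1 : Nat.lcm n k = m * k := by
    apply Nat.eq_of_mul_eq_mul_left hd
    calc d * Nat.lcm n k = n * k := by rw [hd_def]; exact Nat.gcd_mul_lcm n k
      _ = d * (m * k) := by rw [← hn']; ring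
  have hL2 : Nat.lcm n k = n * c := by
    apply Nat.eq_of_mul_eq_mul_left hd
    calc d * Nat.lcm n k = n * k := by rw [hd_def]; exact Nat.gcd_mul_lcm n k
      _ = d * (n * c) := by rw [← hk']; ring
  have hNk : Nat.lcm n k / k = m := by rw [hL1, Nat.mul_div_cancel _ hk]
  set y := a / (ξ + 1) with hy_def
  set x₀ := T k (Nat.lcm n k) y with hx0_def
  have hT : x₀ = ∑ i ∈ Finset.range m, y ^ 2 ^ (k * i) := by
    rw [hx0_def]; simp only [T]; rw [hNk]
  -- ξ facts
  have hξ0 : ξ ≠ 0 := by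
    intro h; rw [h, zero_pow (by positivity)] at hξ
    exact zero_ne_one hξ
  have hξn : ξ ^ 2 ^ n = ξ⁻¹ := by
    have h1 : ξ * ξ ^ 2 ^ n = 1 := by rw [← pow_succ']; exact hξ
    exact eq_inv_of_mul_eq_one_right h1
  have hξ1' : ξ + 1 ≠ 0 := by
    intro h
    apply hξ1
    have h1 : ξ = -1 := eq_neg_of_add_eq_zero_left h
    rwa [CharTwo.neg_eq] at h1
  have hinv1 : ξ⁻¹ + 1 = (ξ + 1) * ξ⁻¹ := by
    field_simp
    ring
  have hya : y * (ξ + 1) = a := by rw [hy_def]; exact div_mul_cancel₀ a hξ1'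
  have keyhalf : a / (ξ⁻¹ + 1) = y + a := by
    rw [hinv1, div_mul_eq_div_div, div_eq_mul_inv (a / (ξ + 1)) ξ⁻¹, inv_inv, ← hy_def]
    linear_combination hya - y * htwo
  have key : y ^ 2 ^ n = y + a := by
    have h1 : y ^ 2 ^ n = a / (ξ⁻¹ + 1) := by
      rw [hy_def, div_pow, qadd, one_pow, ha, hξn]
    rw [h1, keyhalf]
  -- the sum ∑ a^(2^(k i)) equals T d n a = 0
  have hcop : Nat.Coprime m c := Nat.coprime_div_gcd_div_gcd hd
  have hsum0 : ∑ i ∈ Finset.range m, a ^ 2 ^ (k * i) = 0 := by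
    have hterm : ∀ i, a ^ 2 ^ (k * i) = a ^ 2 ^ (d * (c * i % m)) := by
      intro i
      rw [qmod a ha (k * i)]
      congr 1
      rw [← hn', ← hk', Nat.mul_assoc, Nat.mul_mod_mul_left]
    have hTa' : ∑ i ∈ Finset.range m, a ^ 2 ^ (d * i) = 0 := by
      have h := hTa; simp only [T] at h; rwa [← hm_def] at h
    calc ∑ i ∈ Finset.range m, a ^ 2 ^ (k * i)
        = ∑ i ∈ Finset.range m, a ^ 2 ^ (d * (c * i % m)) :=
          Finset.sum_congr rfl (fun i _ => hterm i)
      _ = ∑ i ∈ Finset.range m, a ^ 2 ^ (d * i) := by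
          rw [← Fin.sum_univ_eq_sum_range (fun i => a ^ 2 ^ (d * (c * i % m))) m,
              ← Fin.sum_univ_eq_sum_range (fun i => a ^ 2 ^ (d * i)) m]
          have hinj : Function.Injective
              (fun i : Fin m => (⟨c * i.val % m, Nat.mod_lt _ hm⟩ : Fin m)) := by
            intro i j hij
            have h' : c * i.val % m = c * j.val % m := congrArg Fin.val hij
            have h'' : (i.val : ℕ) ≡ j.val [MOD m] :=
              Nat.ModEq.cancel_left_of_coprime hcop h'
            exact Fin.ext (by
              rwa [Nat.ModEq, Nat.mod_eq_of_lt i.isLt, Nat.mod_eq_of_lt j.isLt] at h'')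
          exact Fintype.sum_bijective _ (Finite.injective_iff_bijective.mp hinj) _ _
            (fun i => rfl)
      _ = 0 := hTa'
  -- Part 1
  have part1 : x₀ ^ 2 ^ n = x₀ := by
    rw [hT, qsum]
    have hterm : ∀ i, (y ^ 2 ^ (k * i)) ^ 2 ^ n = y ^ 2 ^ (k * i) + a ^ 2 ^ (k * i) := by
      intro i
      rw [qq, Nat.add_comm (k * i) n, ← qq, key, qadd]
    rw [Finset.sum_congr rfl (fun i _ => hterm i), Finset.sum_add_distrib, hsum0, add_zero]
  -- Part 2
  have hξ2n : ξ ^ 2 ^ (2 * n) = ξ := by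
    rw [two_mul, ← qq, hξn, inv_pow, hξn, inv_inv]
  have hξD : ξ ^ 2 ^ Nat.lcm n k = ξ⁻¹ := by
    obtain ⟨t, ht⟩ := hodd
    rw [hL2, ht, show n * (2 * t + 1) = 2 * n * t + n from by ring, ← qq,
      qmul ξ hξ2n t, hξn]
  have hyL : y ^ 2 ^ (k * m) = a / (ξ⁻¹ + 1) := by
    rw [show k * m = Nat.lcm n k from by rw [hL1, Nat.mul_comm], hy_def, div_pow, qadd,
      one_pow, hξD, hL2, qmul a ha c]
  have part2 : x₀ ^ 2 ^ k + x₀ = a := by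
    rw [hT, qsum]
    have hterm : ∀ i, (y ^ 2 ^ (k * i)) ^ 2 ^ k = y ^ 2 ^ (k * (i + 1)) := by
      intro i
      rw [qq, show k * i + k = k * (i + 1) from by ring]
    rw [Finset.sum_congr rfl (fun i _ => hterm i)]
    have hs1 := Finset.sum_range_succ' (fun i => y ^ 2 ^ (k * i)) m
    have hs2 := Finset.sum_range_succ (fun i => y ^ 2 ^ (k * i)) m
    have eA : (∑ i ∈ Finset.range m, y ^ 2 ^ (k * (i + 1)))
        = (∑ i ∈ Finset.range (m + 1), y ^ 2 ^ (k * i)) + y ^ 2 ^ (k * 0) := by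
      rw [hs1, add_assoc, CharTwo.add_self_eq_zero, add_zero]
    have eB : (∑ i ∈ Finset.range m, y ^ 2 ^ (k * i))
        = (∑ i ∈ Finset.range (m + 1), y ^ 2 ^ (k * i)) + y ^ 2 ^ (k * m) := by
      rw [hs2, add_assoc, CharTwo.add_self_eq_zero, add_zero]
    rw [eA, eB, add_add_add_comm, CharTwo.add_self_eq_zero, zero_add,
      Nat.mul_zero, pow_zero, pow_one, hyL, keyhalf, ← add_assoc,
      CharTwo.add_self_eq_zero, zero_add]
  refine ⟨part1, part2, ?_⟩
  -- Part 3
  ext x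
  simp only [Set.mem_setOf_eq, Set.mem_image]
  constructor
  · rintro ⟨hx1, hx2⟩
    refine ⟨x₀ + x, ?_, ?_⟩
    · have hbn : (x₀ + x) ^ 2 ^ n = x₀ + x := by rw [qadd, part1, hx1]
      have hbk : (x₀ + x) ^ 2 ^ k = x₀ + x := by
        rw [qadd]
        linear_combination part2 + hx2 - (x₀ + x - a) * htwo
      exact qgcd (x₀ + x) n k hbn hbk
    · rw [← add_assoc, CharTwo.add_self_eq_zero, zero_add]
  · rintro ⟨b, hb, rfl⟩
    have hbn : b ^ 2 ^ n = b := by rw [← hn']; exact qmul b hb m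
    have hbk : b ^ 2 ^ k = b := by rw [← hk']; exact qmul b hb c
    constructor
    · rw [qadd, part1, hbn]
    · rw [qadd, hbk]
      linear_combination part2 + b * htwo
end

section
/- Let n, k be positive integers, d = gcd(n,k), a ∈ GF(2^n). If k/d is odd, then T_k(x) = a has a solution x in GF(2^n) if and only if T_d^n(a) ∈ GF(2), and in that case there are exactly 2^{d-1} solutions in GF(2^n). If k/d is even, then T_k(x) = a has a solution in GF(2^n) if and only if T_d^n(a) = 0, and in that case there are exactly 2^d solutions in GF(2^n). -/
/-!
Write `S e` for the fixed points of `x ↦ x ^ 2 ^ e` (the field with `2 ^ e` elements),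
`d = gcd n k` and `m = k / d`. On `S n` the map `T_k` is additive, so its nonempty fibres are
cosets of its kernel. A root of `T_k` satisfies `x ^ 2 ^ k = x`, hence lies in `S d`, where `T_k`
is `m` times the absolute trace `T_d`: the kernel is `S d` (`m` even) or the kernel of the trace
of `S d` (`m` odd), of size `2 ^ d` resp. `2 ^ (d - 1)`. As `T_d^n` commutes with `T_k`, the image
of `T_k` lies in `{y | T_d^n y = 0}` resp. `{y | T_d^n y ∈ GF(2)}`. All fibres of
`T_d^n : S n → S d` have `2 ^ (n - d)` elements (at most that many by degree, and
`|S n| = |S d| * 2 ^ (n - d)`), so these sets have `2 ^ n / |ker T_k|` elements and are the whole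
image.
-/

open Finset Function Polynomial

section Counting

variable {α β : Type*}

theorem ncard_fiber_eq_of_ncard_fiber_le {S : Set α} {C : Set β} {f : α → β} {M : ℕ}
    (hS : S.Finite) (hC : C.Finite) (hmaps : Set.MapsTo f S C)
    (hle : ∀ c ∈ C, {x | x ∈ S ∧ f x = c}.ncard ≤ M) (hcard : S.ncard = C.ncard * M)
    {c : β} (hc : c ∈ C) : {x | x ∈ S ∧ f x = c}.ncard = M := by
  classical
  obtain ⟨s, rfl⟩ := hS.exists_finset_coe
  obtain ⟨t, rfl⟩ := hC.exists_finset_coe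
  simp only [mem_coe, ← coe_filter, Set.ncard_coe_finset] at hle hcard hc ⊢
  have hsum : ∑ b ∈ t, {x ∈ s | f x = b}.card = ∑ _b ∈ t, M := by
    rw [← card_eq_sum_card_fiberwise hmaps, hcard, sum_const, smul_eq_mul]
  exact (sum_eq_sum_iff_of_le hle).1 hsum c hc

variable [AddGroup α] [AddGroup β] {f : α → β} {S : Set α}

theorem ncard_fiber_le_ncard_ker (hf : ∀ x y, f (x + y) = f x + f y) (hS : S.Finite)
    (hsub : ∀ x ∈ S, ∀ y ∈ S, x - y ∈ S) (c : β) :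
    {x | x ∈ S ∧ f x = c}.ncard ≤ {x | x ∈ S ∧ f x = 0}.ncard := by
  rcases Set.eq_empty_or_nonempty {x | x ∈ S ∧ f x = c} with hempty | ⟨x₀, hx₀S, hx₀⟩
  · simp [hempty]
  refine Set.ncard_le_ncard_of_injOn (· - x₀) ?_ sub_left_injective.injOn
    (hS.subset fun _ h => h.1)
  rintro x ⟨hxS, hx⟩
  refine ⟨hsub x hxS x₀ hx₀S, ?_⟩
  have h := hf (x - x₀) x₀
  rw [sub_add_cancel, hx, hx₀] at h
  exact right_eq_add.1 h

theorem ncard_fiber_eq_ncard_ker {C : Set β} (hf : ∀ x y, f (x + y) = f x + f y)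
    (hS : S.Finite) (hsub : ∀ x ∈ S, ∀ y ∈ S, x - y ∈ S) (hC : C.Finite)
    (hmaps : Set.MapsTo f S C) (hcard : C.ncard * {x | x ∈ S ∧ f x = 0}.ncard = S.ncard)
    {c : β} (hc : c ∈ C) :
    {x | x ∈ S ∧ f x = c}.ncard = {x | x ∈ S ∧ f x = 0}.ncard :=
  ncard_fiber_eq_of_ncard_fiber_le hS hC hmaps
    (fun c _ => ncard_fiber_le_ncard_ker hf hS hsub c) hcard.symm hc

end Counting

section PowTwoPow

theorem isPeriodicPt_sq_iff {M : Type*} [Monoid M] {x : M} {e : ℕ} :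
    IsPeriodicPt (· ^ 2) e x ↔ x ^ 2 ^ e = x := by
  simp [IsPeriodicPt, IsFixedPt, pow_iterate]

theorem pow_two_pow_eq_self_of_dvd {M : Type*} [Monoid M] {x : M} {l e : ℕ} (hle : l ∣ e)
    (hx : x ^ 2 ^ l = x) : x ^ 2 ^ e = x := by
  obtain ⟨m, rfl⟩ := hle
  exact isPeriodicPt_sq_iff.1 ((isPeriodicPt_sq_iff.2 hx).mul_const m)

variable {F : Type*} [Field F] [CharP F 2] [IsAlgClosed F]

theorem ncard_setOf_pow_two_pow_eq_self {e : ℕ} (he : 0 < e) :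
    {x : F | x ^ 2 ^ e = x}.ncard = 2 ^ e := by
  classical
  have hsep : (X ^ 2 ^ e - X : F[X]).Separable :=
    galois_poly_separable 2 _ (dvd_pow_self 2 he.ne')
  have hroots : (X ^ 2 ^ e - X : F[X]).rootSet F = {x : F | x ^ 2 ^ e = x} := by
    ext x
    rw [mem_rootSet, coe_aeval_eq_eval]
    simp [hsep.ne_zero, sub_eq_zero]
  rw [← hroots, ← Nat.card_coe_set_eq, Nat.card_eq_fintype_card,
    card_rootSet_eq_natDegree hsep (IsAlgClosed.splits _),
    FiniteField.X_pow_card_sub_X_natDegree_eq F (Nat.one_lt_two_pow he.ne')]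

theorem finite_setOf_pow_two_pow_eq_self {e : ℕ} (he : 0 < e) :
    {x : F | x ^ 2 ^ e = x}.Finite :=
  Set.finite_of_ncard_ne_zero (by rw [ncard_setOf_pow_two_pow_eq_self he]; positivity)

end PowTwoPow

/-- `T l k = relTrace l (k / l)`; indexing by the number of terms avoids the division. -/
noncomputable def relTrace {F : Type*} [Field F] (l N : ℕ) (x : F) : F :=
  ∑ j ∈ range N, x ^ 2 ^ (l * j)

theorem T_eq_relTrace {F : Type*} [Field F] (l k : ℕ) (x : F) :
    T l k x = relTrace l (k / l) x :=
  rfl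

namespace relTrace

variable {F : Type*} [Field F] {n k l N : ℕ} {x : F}

theorem length_add (l a b : ℕ) (x : F) :
    relTrace l (a + b) x = relTrace l a x + relTrace l b (x ^ 2 ^ (l * a)) := by
  simp only [relTrace, sum_range_add, ← pow_mul, ← pow_add, mul_add]

/-- Stated with `encard`, so that it includes the finiteness of the fibre. -/
theorem encard_setOf_eq_le (hl : 0 < l) (hN : 0 < N) (c : F) :
    {x : F | relTrace l N x = c}.encard ≤ 2 ^ (l * (N - 1)) := by
  obtain ⟨M, rfl⟩ : ∃ M, N = M + 1 := ⟨N - 1, by omega⟩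
  rw [Nat.add_sub_cancel]
  set E := 2 ^ (l * M)
  set Q : F[X] := ∑ j ∈ range M, X ^ 2 ^ (l * j) - C c
  have hQ : Q.degree < E := by
    refine (degree_sub_le _ _).trans_lt (max_lt ?_ (degree_C_le.trans_lt (by simp [E])))
    refine (degree_sum_le _ _).trans_lt
      ((Finset.sup_lt_iff (WithBot.bot_lt_coe _)).2 fun j hj => ?_)
    rw [degree_X_pow]
    exact_mod_cast Nat.pow_lt_pow_right one_lt_two
      (Nat.mul_lt_mul_of_pos_left (mem_range.1 hj) hl)
  have hdeg : (X ^ E + Q).natDegree = E := by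
    rw [natDegree_add_eq_left_of_degree_lt (by rwa [degree_X_pow]), natDegree_X_pow]
  have hsub : {x : F | relTrace l (M + 1) x = c} ⊆ (X ^ E + Q).rootSet F := by
    intro x (hx : relTrace l (M + 1) x = c)
    rw [mem_rootSet, coe_aeval_eq_eval]
    refine ⟨(monic_X_pow_add hQ).ne_zero, ?_⟩
    simp only [relTrace, sum_range_succ] at hx
    simp only [Q, eval_add, eval_sub, eval_pow, eval_X, eval_C, eval_finsetSum]
    rw [← hx]
    ring
  calc {x : F | relTrace l (M + 1) x = c}.encard ≤ ((X ^ E + Q).rootSet F).encard :=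
        Set.encard_le_encard hsub
    _ = ((X ^ E + Q).rootSet F).ncard := (Set.toFinite _).cast_ncard_eq.symm
    _ ≤ E := by exact_mod_cast (ncard_rootSet_le _ F).trans_eq hdeg

section CharTwo

variable [CharP F 2]

theorem add (l N : ℕ) (x y : F) :
    relTrace l N (x + y) = relTrace l N x + relTrace l N y := by
  simp only [relTrace, add_pow_char_pow, sum_add_distrib]

theorem pow_two_pow (l N e : ℕ) (x : F) :
    relTrace l N x ^ 2 ^ e = relTrace l N (x ^ 2 ^ e) := by
  simp only [relTrace, sum_pow_char_pow, ← pow_mul, mul_comm]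

theorem pow_two_pow_eq_self_of_pow {e : ℕ} (hx : x ^ 2 ^ e = x) :
    relTrace l N x ^ 2 ^ e = relTrace l N x := by
  rw [pow_two_pow, hx]

theorem comm (l N l' N' : ℕ) (x : F) :
    relTrace l N (relTrace l' N' x) = relTrace l' N' (relTrace l N x) := by
  simp only [relTrace, sum_pow_char_pow, ← pow_mul]
  rw [sum_comm]
  simp only [mul_comm]

theorem pow_add_self (l N : ℕ) (x : F) :
    relTrace l N x ^ 2 ^ l + x = relTrace l N x + x ^ 2 ^ (l * N) := by
  have hsingle : ∀ y : F, relTrace l 1 y = y := by simp [relTrace]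
  have hshift := length_add l N 1 x
  rw [add_comm N, length_add l 1 N x, hsingle, hsingle, mul_one, ← pow_two_pow] at hshift
  rw [add_comm, hshift]

theorem pow_two_pow_eq_self_of_pow_mul (hx : x ^ 2 ^ (l * N) = x) :
    relTrace l N x ^ 2 ^ l = relTrace l N x := by
  have h := pow_add_self l N x
  rwa [hx, add_left_inj] at h

theorem pow_mul_eq_self_of_eq_zero (h : relTrace l N x = 0) : x ^ 2 ^ (l * N) = x := by
  have h' := pow_add_self l N x
  rwa [h, zero_pow (by positivity), zero_add, zero_add, eq_comm] at h'

theorem one_mul_eq_ite (hx : x ^ 2 ^ l = x) (m : ℕ) :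
    relTrace 1 (l * m) x = if Even m then 0 else relTrace 1 l x := by
  induction m with
  | zero => simp [relTrace]
  | succ m ih =>
    rw [Nat.mul_succ, length_add, one_mul, pow_two_pow_eq_self_of_dvd (dvd_mul_right l m) hx, ih]
    by_cases hm : Even m
    · simp [hm, Nat.even_add_one]
    · simp [hm, Nat.even_add_one, CharTwo.add_self_eq_zero]

theorem one_eq_ite_of_dvd (hlk : l ∣ k) (hx : x ^ 2 ^ l = x) :
    relTrace 1 k x = if Even (k / l) then 0 else relTrace 1 l x := by
  conv_lhs => rw [← Nat.mul_div_cancel' hlk]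
  exact one_mul_eq_ite hx _

theorem pow_gcd_eq_self_of_one_eq_zero (hx : x ^ 2 ^ n = x) (h : relTrace 1 k x = 0) :
    x ^ 2 ^ n.gcd k = x := by
  have hk : x ^ 2 ^ (1 * k) = x := pow_mul_eq_self_of_eq_zero h
  rw [one_mul] at hk
  exact isPeriodicPt_sq_iff.1 ((isPeriodicPt_sq_iff.2 hx).gcd (isPeriodicPt_sq_iff.2 hk))

theorem gcd_one_eq_ite (hx : x ^ 2 ^ n = x) :
    relTrace (n.gcd k) (n / n.gcd k) (relTrace 1 k x) =
      if Even (k / n.gcd k) then 0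
      else relTrace 1 (n.gcd k) (relTrace (n.gcd k) (n / n.gcd k) x) := by
  rw [← Nat.mul_div_cancel' (Nat.gcd_dvd_left n k)] at hx
  rw [comm, one_eq_ite_of_dvd (Nat.gcd_dvd_right n k) (pow_two_pow_eq_self_of_pow_mul hx)]

theorem gcd_one_eq_zero_of_even (hm : Even (k / n.gcd k)) (hx : x ^ 2 ^ n = x) :
    relTrace (n.gcd k) (n / n.gcd k) (relTrace 1 k x) = 0 := by
  rw [gcd_one_eq_ite hx, if_pos hm]

theorem gcd_one_sq_eq_self_of_odd (hm : Odd (k / n.gcd k)) (hx : x ^ 2 ^ n = x) :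
    relTrace (n.gcd k) (n / n.gcd k) (relTrace 1 k x) ^ 2 =
      relTrace (n.gcd k) (n / n.gcd k) (relTrace 1 k x) := by
  rw [gcd_one_eq_ite hx, if_neg (Nat.not_even_iff_odd.2 hm)]
  rw [← Nat.mul_div_cancel' (Nat.gcd_dvd_left n k)] at hx
  have hy := pow_two_pow_eq_self_of_pow_mul hx
  rw [← one_mul (n.gcd k)] at hy
  simpa using pow_two_pow_eq_self_of_pow_mul hy

variable [IsAlgClosed F]

theorem ncard_fiber (hl : 0 < l) (hN : 0 < N) {c : F} (hc : c ^ 2 ^ l = c) :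
    {x : F | x ^ 2 ^ (l * N) = x ∧ relTrace l N x = c}.ncard = 2 ^ (l * (N - 1)) := by
  have hS := finite_setOf_pow_two_pow_eq_self (F := F) (Nat.mul_pos hl hN)
  refine ncard_fiber_eq_of_ncard_fiber_le hS (finite_setOf_pow_two_pow_eq_self hl)
    (fun x hx => pow_two_pow_eq_self_of_pow_mul hx) (fun c _ => ?_) ?_ hc
  · rw [← Nat.cast_le (α := ℕ∞), (hS.subset fun _ hx => hx.1).cast_ncard_eq]
    exact (Set.encard_le_encard fun _ hx => hx.2).trans (encard_setOf_eq_le hl hN c)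
  · rw [ncard_setOf_pow_two_pow_eq_self (Nat.mul_pos hl hN), ncard_setOf_pow_two_pow_eq_self hl,
      ← pow_add, Nat.mul_sub_one, Nat.add_sub_cancel' (Nat.le_mul_of_pos_right l hN)]

theorem ncard_sq_eq_self (hl : 0 < l) (hN : 0 < N) :
    {x : F | x ^ 2 ^ (l * N) = x ∧ relTrace l N x ^ 2 = relTrace l N x}.ncard =
      2 * 2 ^ (l * (N - 1)) := by
  have hS := finite_setOf_pow_two_pow_eq_self (F := F) (Nat.mul_pos hl hN)
  have hsplit : {x : F | x ^ 2 ^ (l * N) = x ∧ relTrace l N x ^ 2 = relTrace l N x} =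
      {x | x ^ 2 ^ (l * N) = x ∧ relTrace l N x = 0} ∪
        {x | x ^ 2 ^ (l * N) = x ∧ relTrace l N x = 1} := by
    ext x
    change _ ∧ _ ↔ (_ ∧ _) ∨ (_ ∧ _)
    rw [← and_or_left, sq]
    exact and_congr_right' IsIdempotentElem.iff_eq_zero_or_one
  rw [hsplit, Set.ncard_union_eq ?_ (hS.subset fun _ hx => hx.1) (hS.subset fun _ hx => hx.1),
    ncard_fiber hl hN (zero_pow (by positivity)), ncard_fiber hl hN (one_pow _), two_mul]
  exact Set.disjoint_left.2 fun x hx₀ hx₁ => zero_ne_one (hx₀.2.symm.trans hx₁.2)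

theorem ncard_one_fiber_eq_ncard_ker (hn : 0 < n) {C : Set F} (hC : C ⊆ {x | x ^ 2 ^ n = x})
    (hmaps : ∀ x : F, x ^ 2 ^ n = x → relTrace 1 k x ∈ C)
    (hcard : C.ncard * {x : F | x ^ 2 ^ n = x ∧ relTrace 1 k x = 0}.ncard = 2 ^ n)
    {c : F} (hc : c ∈ C) :
    {x : F | x ^ 2 ^ n = x ∧ relTrace 1 k x = c}.ncard =
      {x : F | x ^ 2 ^ n = x ∧ relTrace 1 k x = 0}.ncard := by
  have hS := finite_setOf_pow_two_pow_eq_self (F := F) hn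
  refine ncard_fiber_eq_ncard_ker (add 1 k) hS (fun x hx y hy => ?_) (hS.subset hC)
    (fun x hx => hmaps x hx) (by rwa [ncard_setOf_pow_two_pow_eq_self hn]) hc
  change (x - y) ^ 2 ^ n = x - y
  rw [sub_pow_char_pow, hx, hy]

theorem ncard_one_fiber_of_odd (hn : 0 < n) (hm : Odd (k / n.gcd k)) {c : F}
    (hc : c ^ 2 ^ n = c)
    (hc' : relTrace (n.gcd k) (n / n.gcd k) c ^ 2 = relTrace (n.gcd k) (n / n.gcd k) c) :
    {x : F | x ^ 2 ^ n = x ∧ relTrace 1 k x = c}.ncard = 2 ^ (n.gcd k - 1) := by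
  set d := n.gcd k
  have hd : 0 < d := Nat.gcd_pos_of_pos_left k hn
  have hdn : d * (n / d) = n := Nat.mul_div_cancel' (Nat.gcd_dvd_left n k)
  have hdle : d ≤ n := Nat.le_of_dvd hn (Nat.gcd_dvd_left n k)
  have hm' : ¬Even (k / d) := Nat.not_even_iff_odd.2 hm
  have hker : {x : F | x ^ 2 ^ n = x ∧ relTrace 1 k x = 0} =
      {x | x ^ 2 ^ d = x ∧ relTrace 1 d x = 0} := by
    ext x
    refine ⟨fun ⟨hx, h⟩ => ?_, fun ⟨hx, h⟩ => ?_⟩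
    · have hxd := pow_gcd_eq_self_of_one_eq_zero hx h
      rw [one_eq_ite_of_dvd (Nat.gcd_dvd_right n k) hxd, if_neg hm'] at h
      exact ⟨hxd, h⟩
    · exact ⟨pow_two_pow_eq_self_of_dvd (Nat.gcd_dvd_left n k) hx,
        by rwa [one_eq_ite_of_dvd (Nat.gcd_dvd_right n k) hx, if_neg hm']⟩
  have hkercard := ncard_fiber (F := F) one_pos hd (zero_pow (by positivity))
  simp only [one_mul] at hkercard
  rw [← hker] at hkercard
  have hC := ncard_sq_eq_self (F := F) hd (Nat.div_pos hdle hd)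
  rw [hdn] at hC
  refine (ncard_one_fiber_eq_ncard_ker hn
    (C := {x | x ^ 2 ^ n = x ∧ relTrace d (n / d) x ^ 2 = relTrace d (n / d) x})
    (fun x hx => hx.1)
    (fun x hx => ⟨pow_two_pow_eq_self_of_pow hx, gcd_one_sq_eq_self_of_odd hm hx⟩)
    ?_ ⟨hc, hc'⟩).trans hkercard
  rw [hC, hkercard, Nat.mul_sub_one, hdn, ← pow_succ', ← pow_add]
  congr 1
  omega

theorem ncard_one_fiber_of_even (hn : 0 < n) (hm : Even (k / n.gcd k)) {c : F}
    (hc : c ^ 2 ^ n = c) (hc' : relTrace (n.gcd k) (n / n.gcd k) c = 0) :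
    {x : F | x ^ 2 ^ n = x ∧ relTrace 1 k x = c}.ncard = 2 ^ n.gcd k := by
  set d := n.gcd k
  have hd : 0 < d := Nat.gcd_pos_of_pos_left k hn
  have hdn : d * (n / d) = n := Nat.mul_div_cancel' (Nat.gcd_dvd_left n k)
  have hdle : d ≤ n := Nat.le_of_dvd hn (Nat.gcd_dvd_left n k)
  have hker : {x : F | x ^ 2 ^ n = x ∧ relTrace 1 k x = 0} = {x | x ^ 2 ^ d = x} := by
    ext x
    refine ⟨fun ⟨hx, h⟩ => pow_gcd_eq_self_of_one_eq_zero hx h, fun hx => ⟨?_, ?_⟩⟩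
    · exact pow_two_pow_eq_self_of_dvd (Nat.gcd_dvd_left n k) hx
    · rw [one_eq_ite_of_dvd (Nat.gcd_dvd_right n k) hx, if_pos hm]
  have hC := ncard_fiber (F := F) hd (Nat.div_pos hdle hd) (zero_pow (by positivity))
  rw [hdn] at hC
  refine (ncard_one_fiber_eq_ncard_ker hn (C := {x | x ^ 2 ^ n = x ∧ relTrace d (n / d) x = 0})
    (fun x hx => hx.1)
    (fun x hx => ⟨pow_two_pow_eq_self_of_pow hx, gcd_one_eq_zero_of_even hm hx⟩)
    ?_ ⟨hc, hc'⟩).trans (by rw [hker, ncard_setOf_pow_two_pow_eq_self hd])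
  rw [hC, hker, ncard_setOf_pow_two_pow_eq_self hd, Nat.mul_sub_one, hdn, ← pow_add]
  congr 1
  omega

end CharTwo

end relTrace

theorem stmt_19_general (n k : ℕ) (hn : 0 < n)
    (a : AlgebraicClosure (ZMod 2)) (ha : a ^ (2 ^ n) = a) :
    (Odd (k / Nat.gcd n k) →
      ((∃ x : AlgebraicClosure (ZMod 2), x ^ (2 ^ n) = x ∧ T 1 k x = a) ↔
          (T (Nat.gcd n k) n a) ^ 2 = T (Nat.gcd n k) n a) ∧
      ((T (Nat.gcd n k) n a) ^ 2 = T (Nat.gcd n k) n a →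
        Set.ncard {x : AlgebraicClosure (ZMod 2) | x ^ (2 ^ n) = x ∧ T 1 k x = a} =
          2 ^ (Nat.gcd n k - 1))) ∧
    (Even (k / Nat.gcd n k) →
      ((∃ x : AlgebraicClosure (ZMod 2), x ^ (2 ^ n) = x ∧ T 1 k x = a) ↔
          T (Nat.gcd n k) n a = 0) ∧
      (T (Nat.gcd n k) n a = 0 →
        Set.ncard {x : AlgebraicClosure (ZMod 2) | x ^ (2 ^ n) = x ∧ T 1 k x = a} =
          2 ^ Nat.gcd n k)) := by
  simp only [T_eq_relTrace, Nat.div_one]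
  refine ⟨fun hm => ⟨⟨?_, fun h => ?_⟩, relTrace.ncard_one_fiber_of_odd hn hm ha⟩,
    fun hm => ⟨⟨?_, fun h => ?_⟩, relTrace.ncard_one_fiber_of_even hn hm ha⟩⟩
  · rintro ⟨x, hx, rfl⟩
    exact relTrace.gcd_one_sq_eq_self_of_odd hm hx
  · exact Set.nonempty_of_ncard_ne_zero
      ((relTrace.ncard_one_fiber_of_odd hn hm ha h).trans_ne (by positivity))
  · rintro ⟨x, hx, rfl⟩
    exact relTrace.gcd_one_eq_zero_of_even hm hx
  · exact Set.nonempty_of_ncard_ne_zero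
      ((relTrace.ncard_one_fiber_of_even hn hm ha h).trans_ne (by positivity))

theorem stmt_19 (n k : ℕ) (hn : 0 < n) (hk : 0 < k)
    (a : AlgebraicClosure (ZMod 2)) (ha : a ^ (2 ^ n) = a) :
    (Odd (k / Nat.gcd n k) →
      ((∃ x : AlgebraicClosure (ZMod 2), x ^ (2 ^ n) = x ∧ T 1 k x = a) ↔
          (T (Nat.gcd n k) n a) ^ 2 = T (Nat.gcd n k) n a) ∧
      ((T (Nat.gcd n k) n a) ^ 2 = T (Nat.gcd n k) n a →
        Set.ncard {x : AlgebraicClosure (ZMod 2) | x ^ (2 ^ n) = x ∧ T 1 k x = a} =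
          2 ^ (Nat.gcd n k - 1))) ∧
    (Even (k / Nat.gcd n k) →
      ((∃ x : AlgebraicClosure (ZMod 2), x ^ (2 ^ n) = x ∧ T 1 k x = a) ↔
          T (Nat.gcd n k) n a = 0) ∧
      (T (Nat.gcd n k) n a = 0 →
        Set.ncard {x : AlgebraicClosure (ZMod 2) | x ^ (2 ^ n) = x ∧ T 1 k x = a} =
          2 ^ Nat.gcd n k)) :=
  stmt_19_general n k hn a ha
end
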